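/- For every integer s ≥ 2 and every ε > 0 there exists η with 0 < η ≤ 1 such that the following holds. Let Z be a finite additive group, let ν : Z → ℝ be nonnegative with ‖ν − 1‖_{U^{2s}(Z)} ≤ η, and let f : Z → ℝ with |f(x)| ≤ ν(x) for all x ∈ Z. If ‖f‖_{w^s(Z)} ≤ η, then ‖f‖_{U^s(Z)} ≤ ε. -/

import Mathlib

open Finset

/-- The average of a real-valued function on a finite type. -/
noncomputable def avg (α : Type*) [Fintype α] (f : α → ℝ) : ℝ :=
  (∑ x, f x) / (Fintype.card α : ℝ)

/-- The Gowers uniformity norm `‖f‖_{U^s(Z)}` of `f : Z → ℝ`. -/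
noncomputable def gowersNorm (Z : Type*) [AddCommGroup Z] [Fintype Z] (s : ℕ) (f : Z → ℝ) : ℝ :=
  (avg (Z × (Fin s → Z)) fun xh =>
      ∏ ω : Fin s → Bool, f (xh.1 + ∑ i, if ω i then xh.2 i else 0)) ^ (((2 : ℝ) ^ s)⁻¹)

/-- The weak uniformity norm `‖f‖_{w^s(Z)}` of `f : Z → ℝ`. -/
noncomputable def weakNorm (Z : Type*) [AddCommGroup Z] [Fintype Z] (s : ℕ) (f : Z → ℝ) : ℝ :=
  sSup {r : ℝ | ∃ h : (Fin s → Bool) → Z → ℝ,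
    (∀ ω x, h ω x ∈ Set.Icc (-1 : ℝ) 1) ∧
    r = avg (Z × (Fin s → Z)) fun xh =>
      f xh.1 * ∏ ω ∈ Finset.univ.filter (fun ω : Fin s → Bool => ω ≠ fun _ => false),
        h ω (xh.1 + ∑ i, if ω i then xh.2 i else 0)}

/-!
Write `‖f‖_{U^s}^{2^s}` as the Gowers inner product of the constant family `f` on the cube
`{0,1}^s`, and replace the copies of `f` one vertex at a time by functions bounded by `1`, keeping
the copy at the vertex `0`; once only that copy is left, the inner product is at most `‖f‖_{w^s}`.

To remove the copy at a vertex `ω₀`, write the inner product as `𝔼 f · D` with `D` the dual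
function at `ω₀`; it is dominated by the dual function `Db` of the majorants (`ν` or `1`) of the
family. The moments `𝔼 c · Db^k` (`c ∈ {1, ν}`, `k ≤ 2`) and `𝔼 (ν - 1) · D²` are Gowers inner
products on the doubled cube `{0,1}^(2s)` of families made of `ν`'s and `1`'s (with one `ν - 1`
in the last case), so by the Gowers–Cauchy–Schwarz inequality and `‖ν - 1‖_{U^{2s}} ≤ η` they are
`1 + O(η)`, resp. `O(η)`. Hence the region `Db > 2` contributes `O(η)`, and on `Db ≤ 2`
Cauchy–Schwarz bounds the rest by the square root of the inner product in which `f` at `ω₀` is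
replaced by the `1`-bounded function `D · 1_{Db ≤ 2} / 2`, up to `O(η)`. Each of the `2^s - 1`
replacements costs a square root, which a small enough `η` absorbs.
-/

open Function
open scoped BigOperators

section Expect
variable {α : Type*} [Fintype α]

lemma avg_eq_expect (f : α → ℝ) : avg α f = 𝔼 x, f x := by
  rw [avg, Fintype.expect_eq_sum_div_card]

lemma expect_add_right_comp {G : Type*} [AddGroup G] [Fintype G] (a : G) (f : G → ℝ) :
    𝔼 x, f (x + a) = 𝔼 x, f x :=
  Fintype.expect_equiv (Equiv.addRight a) _ _ fun _ => rfl

lemma sq_expect_mul_le (w a : α → ℝ) (hw : ∀ x, 0 ≤ w x) :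
    (𝔼 x, w x * a x) ^ 2 ≤ (𝔼 x, w x) * 𝔼 x, w x * a x ^ 2 := by
  have key := expect_mul_sq_le_sq_mul_sq univ (fun x => √(w x)) (fun x => √(w x) * a x)
  simp only [mul_pow, Real.sq_sqrt (hw _), ← mul_assoc, Real.mul_self_sqrt (hw _)] at key
  exact key

lemma expect_eq_expect_update {ι Z : Type*} [Fintype ι] [DecidableEq ι] [Fintype Z] [Nonempty Z]
    (i : ι) (W : (ι → Z) → ℝ) :
    𝔼 h, W h = 𝔼 h, 𝔼 z, W (update h i z) := by
  let e : (ι → Z) × Z ≃ (ι → Z) × Z :=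
    ⟨fun p => (update p.1 i p.2, p.1 i), fun p => (update p.1 i p.2, p.1 i),
      fun p => by simp, fun p => by simp⟩
  calc 𝔼 h, W h = 𝔼 h, 𝔼 _z : Z, W h := by simp only [Fintype.expect_const]
    _ = 𝔼 h, 𝔼 z, W (update h i z) := by
      rw [← expect_product', ← expect_product', univ_product_univ]
      exact Fintype.expect_equiv e _ _ fun p => by simp [e]

end Expect

lemma prod_eq_mul_prod_update_one {κ α M : Type*} [Fintype κ] [DecidableEq κ] [CommMonoid M]
    (g : κ → α → M) (ω₀ : κ) (z : κ → α) :
    ∏ ω, g ω (z ω) = g ω₀ (z ω₀) * ∏ ω, update g ω₀ 1 ω (z ω) := by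
  rw [Fintype.prod_eq_mul_prod_compl ω₀,
    Fintype.prod_eq_mul_prod_compl ω₀ fun ω => update g ω₀ 1 ω (z ω)]
  simp only [update_self, Pi.one_apply, one_mul]
  congr 1
  exact prod_congr rfl fun ω hω => by rw [update_of_ne (by simpa using hω)]

lemma prod_piecewise_one_apply {σ α M : Type*} [Fintype σ] [DecidableEq σ] [CommMonoid M]
    (T : Finset σ) (F : α → M) (z : σ → α) :
    ∏ τ, T.piecewise (fun _ => F) 1 τ (z τ) = ∏ τ ∈ T, F (z τ) := by
  rw [← univ_inter T, ← prod_ite_mem]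
  exact prod_congr rfl fun τ _ => by by_cases h : τ ∈ T <;> simp [h]

lemma piecewise_update_of_notMem {ι : Type*} [DecidableEq ι] {J : Finset ι} {a : ι} (ha : a ∉ J)
    (ε ω : ι → Bool) (b : Bool) :
    J.piecewise ε (update ω a b) = (insert a J).piecewise (update ε a b) ω := by
  ext j
  rcases eq_or_ne j a with rfl | hj
  · simp [ha]
  · by_cases hjJ : j ∈ J <;> simp [hjJ, hj]

lemma exists_majorant {κ α : Type*} {ν : α → ℝ} (g : κ → α → ℝ)
    (hg : ∀ ω, (∀ x, |g ω x| ≤ ν x) ∨ ∀ x, |g ω x| ≤ 1) :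
    ∃ M : κ → α → ℝ, (∀ ω, M ω = ν ∨ M ω = 1) ∧ ∀ ω x, |g ω x| ≤ M ω x := by
  classical
  refine ⟨fun ω => if ∀ x, |g ω x| ≤ ν x then ν else 1, fun ω => ?_, fun ω x => ?_⟩ <;>
    by_cases h : ∀ x, |g ω x| ≤ ν x
  · simp [h]
  · simp [h]
  · simp only [if_pos h, h x]
  · simpa [h] using (hg ω).resolve_left h x

section Cube
variable {ι Z : Type*} [Fintype ι] [AddCommGroup Z]

/-- The offset `ω · h` of the vertex `ω` of the cube spanned by `h`. -/
def cubeDot (ω : ι → Bool) (h : ι → Z) : Z := ∑ i, if ω i then h i else 0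

lemma cubeDot_false (h : ι → Z) : cubeDot (fun _ => false) h = 0 := by simp [cubeDot]

lemma cubeDot_eq_ite_add_update [DecidableEq ι] (ω : ι → Bool) (h : ι → Z) (i : ι) :
    cubeDot ω h = (if ω i then h i else 0) + cubeDot ω (update h i 0) := by
  have hupd : ∀ j, (if ω j then update h i 0 j else 0) =
      update (fun j => if ω j then h j else 0) i 0 j := by
    intro j
    rcases eq_or_ne j i with rfl | hj <;> simp [*]
  simp only [cubeDot, hupd, sum_update_of_mem (mem_univ i), zero_add]
  exact Fintype.sum_eq_add_sum_compl i _

lemma cubeDot_update_of_eq_zero [DecidableEq ι] (ω : ι → Bool) {h : ι → Z} {i : ι} (hi : h i = 0)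
    (b : Bool) :
    cubeDot (update ω i b) h = cubeDot ω h := by
  refine sum_congr rfl fun j _ => ?_
  rcases eq_or_ne j i with rfl | hj
  · simp [hi]
  · rw [update_of_ne hj]

lemma cubeDot_sumElim {κ : Type*} [Fintype κ] (α : κ → Bool) (β : ι → Bool) (h : κ ⊕ ι → Z) :
    cubeDot (Sum.elim α β) h = cubeDot α (h ∘ Sum.inl) + cubeDot β (h ∘ Sum.inr) :=
  Fintype.sum_sum_type _

lemma cubeDot_comp_equiv {κ : Type*} [Fintype κ] (e : ι ≃ κ) (ω : κ → Bool) (h : κ → Z) :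
    cubeDot (ω ∘ e) (h ∘ e) = cubeDot ω h :=
  e.sum_comp fun k => if ω k then h k else 0

end Cube

noncomputable def gowersInner (ι : Type*) {Z : Type*} [Fintype ι] [DecidableEq ι] [AddCommGroup Z]
    [Fintype Z] (g : (ι → Bool) → Z → ℝ) : ℝ :=
  𝔼 x, 𝔼 h : ι → Z, ∏ ω, g ω (x + cubeDot ω h)

lemma gowersNorm_eq_gowersInner_rpow {Z : Type*} [AddCommGroup Z] [Fintype Z] (s : ℕ)
    (f : Z → ℝ) : gowersNorm Z s f = gowersInner (Fin s) (fun _ => f) ^ ((2 : ℝ) ^ s)⁻¹ := by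
  rw [gowersNorm, avg_eq_expect, ← univ_product_univ, expect_product]
  rfl

section GowersCauchySchwarz
variable {ι Z : Type*} [Fintype ι] [DecidableEq ι] [AddCommGroup Z] [Fintype Z]

/-- The average over `x` of the product of `g` over the face `ω i = b` of the cube based at `x`
and spanned by `h` (whose `i`-th coordinate is ignored). -/
noncomputable def faceAvg (g : (ι → Bool) → Z → ℝ) (i : ι) (b : Bool) (h : ι → Z) : ℝ :=
  𝔼 x, ∏ ω with ω i = b, g ω (x + cubeDot ω (update h i 0))

lemma gowersInner_eq_expect_faceAvg_mul [Nonempty Z] (g : (ι → Bool) → Z → ℝ) (i : ι) :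
    gowersInner ι g = 𝔼 h, faceAvg g i false h * faceAvg g i true h := by
  set A : Z → (ι → Z) → ℝ := fun x h => ∏ ω with ω i = false, g ω (x + cubeDot ω (update h i 0))
  set B : Z → (ι → Z) → ℝ := fun x h => ∏ ω with ω i = true, g ω (x + cubeDot ω (update h i 0))
  have hprod : ∀ x h, ∏ ω, g ω (x + cubeDot ω h) = A x h * B (x + h i) h := by
    intro x h
    rw [← prod_filter_mul_prod_filter_not univ (fun ω => ω i = false)]
    congr 1
    · refine prod_congr rfl fun ω hω => ?_
      rw [cubeDot_eq_ite_add_update ω h i, (mem_filter.1 hω).2]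
      simp
    · refine prod_congr (by ext; simp) fun ω hω => ?_
      rw [cubeDot_eq_ite_add_update ω h i, (mem_filter.1 hω).2, if_pos rfl, add_assoc]
  have hA : ∀ x h z, A x (update h i z) = A x h := by simp [A, update_idem]
  have hB : ∀ x h z, B x (update h i z) = B x h := by simp [B, update_idem]
  calc gowersInner ι g = 𝔼 h, 𝔼 x, A x h * B (x + h i) h := by
        rw [gowersInner, expect_comm]
        simp only [hprod]
    -- re-averaging over the `i`-th coordinate of `h` decouples the two faces
    _ = 𝔼 h, 𝔼 z, 𝔼 x, A x h * B (x + z) h := by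
        rw [expect_eq_expect_update i]
        simp only [hA, hB, update_self]
    _ = 𝔼 h, (𝔼 x, A x h) * 𝔼 z, B z h := by
        refine expect_congr rfl fun h _ => ?_
        rw [expect_comm, expect_mul]
        refine expect_congr rfl fun x _ => ?_
        rw [← mul_expect]
        simpa only [add_comm] using congrArg (A x h * ·) (expect_add_right_comp x (B · h))
    _ = _ := rfl

lemma faceAvg_comp_update (g : (ι → Bool) → Z → ℝ) (i : ι) (b c : Bool) (h : ι → Z) :
    faceAvg (fun ω => g (update ω i b)) i c h = faceAvg g i b h := by
  refine expect_congr rfl fun x _ => ?_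
  refine prod_nbij' (update · i b) (update · i c) (by simp) (by simp) ?_ ?_ ?_
  · intro ω hω
    replace hω : ω i = c := by simpa using hω
    rw [update_idem, ← hω, update_eq_self]
  · intro ω hω
    replace hω : ω i = b := by simpa using hω
    rw [update_idem, ← hω, update_eq_self]
  · intro ω _
    rw [cubeDot_update_of_eq_zero ω (update_self i 0 h)]

variable [Nonempty Z]

lemma gowersInner_sq_le (g : (ι → Bool) → Z → ℝ) (i : ι) :
    gowersInner ι g ^ 2 ≤ gowersInner ι (fun ω => g (update ω i false)) *
      gowersInner ι (fun ω => g (update ω i true)) := by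
  simp only [gowersInner_eq_expect_faceAvg_mul _ i, faceAvg_comp_update, ← sq]
  exact expect_mul_sq_le_sq_mul_sq _ _ _

lemma gowersInner_const_nonneg [Nonempty ι] (f : Z → ℝ) : 0 ≤ gowersInner ι fun _ => f := by
  obtain ⟨i⟩ := ‹Nonempty ι›
  rw [gowersInner_eq_expect_faceAvg_mul _ i]
  refine expect_nonneg fun h _ => ?_
  rw [← faceAvg_comp_update (fun _ => f) i false true h]
  exact mul_self_nonneg _

lemma prod_filter_insert_eq_false {M : Type*} [CommMonoid M] {J : Finset ι} {a : ι} (ha : a ∉ J)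
    (F : (ι → Bool) → M) :
    ∏ ε with ∀ j ∉ insert a J, ε j = false, F ε =
      ∏ ε with ∀ j ∉ J, ε j = false, F (update ε a false) * F (update ε a true) := by
  have hpair : ∀ ε, F (update ε a false) * F (update ε a true) = ∏ b, F (update ε a b) := by
    simp [mul_comm]
  rw [prod_congr rfl fun ε _ => hpair ε, ← prod_product' _ _ fun ε b => F (update ε a b)]
  symm
  refine prod_nbij' (fun p => update p.1 a p.2) (fun ε => (update ε a false, ε a)) ?_ ?_ ?_ ?_
    fun _ _ => rfl
  · simp only [mem_product, mem_filter, mem_univ, true_and, and_true, mem_insert, not_or]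
    rintro ⟨ε, b⟩ hε j ⟨hja, hjJ⟩
    simpa [update_of_ne hja] using hε j hjJ
  · simp only [mem_product, mem_filter, mem_univ, true_and, and_true, mem_insert, not_or]
    intro ε hε j hjJ
    rcases eq_or_ne j a with rfl | hja
    · simp
    · simpa [update_of_ne hja] using hε j ⟨hja, hjJ⟩
  · simp only [mem_product, mem_filter, mem_univ, true_and, and_true]
    rintro ⟨ε, b⟩ hε
    simp [update_idem, ← hε a ha]
  · intro ε _
    simp

lemma abs_gowersInner_pow_le_prod_piecewise (g : (ι → Bool) → Z → ℝ) (J : Finset ι) :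
    |gowersInner ι g| ^ 2 ^ #J ≤
      ∏ ε with ∀ j ∉ J, ε j = false, |gowersInner ι fun ω => g (J.piecewise ε ω)| := by
  induction J using Finset.induction with
  | empty =>
    have : ({ε | ∀ j ∉ (∅ : Finset ι), ε j = false} : Finset (ι → Bool)) = {fun _ => false} := by
      ext ε
      simp [funext_iff]
    simp only [card_empty, pow_zero, pow_one, this, prod_singleton, piecewise_empty, le_refl]
  | @insert a J ha IH =>
    rw [card_insert_of_notMem ha, pow_succ, pow_mul, prod_filter_insert_eq_false ha]
    calc (|gowersInner ι g| ^ 2 ^ #J) ^ 2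
        ≤ (∏ ε with ∀ j ∉ J, ε j = false, |gowersInner ι fun ω => g (J.piecewise ε ω)|) ^ 2 :=
          pow_le_pow_left₀ (by positivity) IH 2
      _ = ∏ ε with ∀ j ∉ J, ε j = false, |gowersInner ι fun ω => g (J.piecewise ε ω)| ^ 2 :=
          (prod_pow _ _ _).symm
      _ ≤ _ := by
          refine prod_le_prod (fun _ _ => by positivity) fun ε _ => ?_
          rw [sq_abs, ← abs_mul]
          refine (gowersInner_sq_le _ a).trans (le_of_eq_of_le ?_ (le_abs_self _))
          simp only [piecewise_update_of_notMem ha]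

/-- The Gowers–Cauchy–Schwarz inequality. -/
lemma abs_gowersInner_pow_le_prod [Nonempty ι] (g : (ι → Bool) → Z → ℝ) :
    |gowersInner ι g| ^ 2 ^ Fintype.card ι ≤ ∏ ε, gowersInner ι fun _ => g ε := by
  have key := abs_gowersInner_pow_le_prod_piecewise g univ
  simp only [mem_univ, not_true_eq_false, IsEmpty.forall_iff, implies_true, filter_true,
    piecewise_univ, card_univ] at key
  simpa only [abs_of_nonneg (gowersInner_const_nonneg _)] using key

end GowersCauchySchwarz

section DualFunction
variable {ι Z : Type*} [Fintype ι] [DecidableEq ι] [AddCommGroup Z] [Fintype Z]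

lemma abs_gowersInner_le {g G : (ι → Bool) → Z → ℝ} (hg : ∀ ω x, |g ω x| ≤ G ω x) :
    |gowersInner ι g| ≤ gowersInner ι G := by
  refine (abs_expect_le _ _).trans (expect_le_expect fun x _ => ?_)
  refine (abs_expect_le _ _).trans (expect_le_expect fun h _ => ?_)
  rw [abs_prod]
  exact prod_le_prod (fun _ _ => abs_nonneg _) fun ω _ => hg ω _

lemma gowersInner_one [Nonempty Z] : gowersInner ι (1 : (ι → Bool) → Z → ℝ) = 1 := by
  simp [gowersInner]

noncomputable def dualFun (g : (ι → Bool) → Z → ℝ) (ω₀ : ι → Bool) (y : Z) : ℝ :=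
  𝔼 h, ∏ ω, update g ω₀ 1 ω (y + (cubeDot ω h - cubeDot ω₀ h))

lemma dualFun_update_self (g : (ι → Bool) → Z → ℝ) (ω₀ : ι → Bool) (φ : Z → ℝ) :
    dualFun (update g ω₀ φ) ω₀ = dualFun g ω₀ := by
  ext y
  simp only [dualFun, update_idem]

lemma dualFun_one [Nonempty Z] (ω₀ : ι → Bool) : dualFun (1 : (ι → Bool) → Z → ℝ) ω₀ = 1 := by
  have h1 : update (1 : (ι → Bool) → Z → ℝ) ω₀ 1 = 1 := update_eq_self ω₀ (1 : (ι → Bool) → Z → ℝ)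
  ext y
  simp [dualFun, h1]

lemma abs_dualFun_le {g G : (ι → Bool) → Z → ℝ} {ω₀ : ι → Bool}
    (hg : ∀ ω ≠ ω₀, ∀ x, |g ω x| ≤ G ω x) (y : Z) : |dualFun g ω₀ y| ≤ dualFun G ω₀ y := by
  refine (abs_expect_le _ _).trans (expect_le_expect fun h _ => ?_)
  rw [abs_prod]
  refine prod_le_prod (fun _ _ => abs_nonneg _) fun ω _ => ?_
  rcases eq_or_ne ω ω₀ with rfl | hω
  · simp
  · simpa [update_of_ne hω] using hg ω hω _

lemma gowersInner_eq_expect_mul_dualFun (g : (ι → Bool) → Z → ℝ) (ω₀ : ι → Bool) :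
    gowersInner ι g = 𝔼 y, g ω₀ y * dualFun g ω₀ y := by
  set F : (ι → Z) → Z → ℝ := fun h y =>
    g ω₀ y * ∏ ω, update g ω₀ 1 ω (y + (cubeDot ω h - cubeDot ω₀ h))
  calc gowersInner ι g = 𝔼 h, 𝔼 x, F h (x + cubeDot ω₀ h) := by
        rw [gowersInner, expect_comm]
        simp only [F, prod_eq_mul_prod_update_one g ω₀, add_add_sub_cancel]
    _ = 𝔼 y, g ω₀ y * dualFun g ω₀ y := by
        rw [expect_congr rfl fun h _ => expect_add_right_comp (cubeDot ω₀ h) (F h), expect_comm]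
        simp only [F, dualFun, mul_expect]

end DualFunction

section PairFamily
variable {ι Z : Type*} [Fintype ι]

/-- On the doubled cube `{0,1}^(ι ⊕ ι)`, whose vertices are pairs `(α, β)`: `c` at `(ω₀, ω₀)`,
`A α` at `(α, ω₀)`, `B β` at `(ω₀, β)`, and `1` elsewhere. -/
noncomputable def pairFamily (ω₀ : ι → Bool) (c : Z → ℝ) (A B : (ι → Bool) → Z → ℝ) :
    (ι ⊕ ι → Bool) → Z → ℝ := fun τ =>
  if τ ∘ Sum.inr = ω₀ then (if τ ∘ Sum.inl = ω₀ then c else A (τ ∘ Sum.inl))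
  else if τ ∘ Sum.inl = ω₀ then B (τ ∘ Sum.inr) else 1

variable {ω₀ : ι → Bool} {c : Z → ℝ} {A B : (ι → Bool) → Z → ℝ}

@[simp] lemma pairFamily_sumElim_self : pairFamily ω₀ c A B (Sum.elim ω₀ ω₀) = c := by
  simp [pairFamily]

lemma pairFamily_mem_of_ne {P : (Z → ℝ) → Prop} (hA : ∀ ω, P (A ω)) (hB : ∀ ω, P (B ω)) (h1 : P 1)
    {τ : ι ⊕ ι → Bool} (hτ : τ ≠ Sum.elim ω₀ ω₀) : P (pairFamily ω₀ c A B τ) := by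
  have hτ' : ¬(τ ∘ Sum.inr = ω₀ ∧ τ ∘ Sum.inl = ω₀) := by
    rintro ⟨hr, hl⟩
    exact hτ (by rw [← Sum.elim_comp_inl_inr τ, hl, hr])
  unfold pairFamily
  split_ifs <;> simp_all

lemma update_pairFamily_sumElim_apply (α β : ι → Bool) (x : Z) :
    update (pairFamily ω₀ c A B) (Sum.elim ω₀ ω₀) 1 (Sum.elim α β) x =
      (if β = ω₀ then update A ω₀ 1 α x else 1) * (if α = ω₀ then update B ω₀ 1 β x else 1) := by
  have helim : Sum.elim α β = Sum.elim ω₀ ω₀ ↔ α = ω₀ ∧ β = ω₀ :=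
    (Equiv.sumArrowEquivProdArrow ι ι Bool).symm.injective.eq_iff.trans Prod.mk_inj
  simp only [update_apply, helim]
  by_cases hα : α = ω₀ <;> by_cases hβ : β = ω₀ <;> simp [pairFamily, hα, hβ]

variable [DecidableEq ι] [AddCommGroup Z] [Fintype Z]

lemma dualFun_pairFamily (y : Z) :
    dualFun (pairFamily ω₀ c A B) (Sum.elim ω₀ ω₀) y = dualFun A ω₀ y * dualFun B ω₀ y := by
  rw [dualFun, dualFun, dualFun, Fintype.expect_mul_expect, ← expect_product',
    univ_product_univ]
  refine Fintype.expect_equiv (Equiv.sumArrowEquivProdArrow ι ι Z) _ _ fun H => ?_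
  rw [Fintype.prod_equiv (Equiv.sumArrowEquivProdArrow ι ι Bool) _
    (fun p => update (pairFamily ω₀ c A B) (Sum.elim ω₀ ω₀) 1 (Sum.elim p.1 p.2)
      (y + (cubeDot (Sum.elim p.1 p.2) H - cubeDot (Sum.elim ω₀ ω₀) H))) (fun τ => by
      simp only [Equiv.sumArrowEquivProdArrow, Equiv.coe_fn_mk, Sum.elim_comp_inl_inr]),
    Fintype.prod_prod_type]
  simp only [update_pairFamily_sumElim_apply, cubeDot_sumElim, prod_mul_distrib, prod_ite_irrel,
    prod_const_one, Fintype.prod_ite_eq', Equiv.sumArrowEquivProdArrow, Equiv.coe_fn_mk]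
  congr 1 <;> refine prod_congr rfl fun ω _ => ?_ <;> abel_nf

lemma gowersInner_pairFamily :
    gowersInner (ι ⊕ ι) (pairFamily ω₀ c A B) = 𝔼 y, c y * (dualFun A ω₀ y * dualFun B ω₀ y) := by
  simp only [gowersInner_eq_expect_mul_dualFun _ (Sum.elim ω₀ ω₀), dualFun_pairFamily,
    pairFamily_sumElim_self]

end PairFamily

section Counting
variable {κ Z : Type*} [Fintype κ] [DecidableEq κ] [AddCommGroup Z] [Fintype Z] {ν : Z → ℝ}
  {η : ℝ}

lemma gowersInner_piecewise_eq_sum_powerset (S : Finset (κ → Bool)) :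
    gowersInner κ (S.piecewise (fun _ => ν) 1) =
      ∑ T ∈ S.powerset, gowersInner κ (T.piecewise (fun _ x => ν x - 1) 1) := by
  have hpt : ∀ z : (κ → Bool) → Z, ∏ τ, S.piecewise (fun _ => ν) 1 τ (z τ) =
      ∑ T ∈ S.powerset, ∏ τ, T.piecewise (fun _ x => ν x - 1) 1 τ (z τ) := by
    intro z
    simp only [prod_piecewise_one_apply]
    rw [← prod_add_one]
    simp
  simp only [gowersInner, hpt, expect_sum_comm]

variable [Nonempty κ] [Nonempty Z]

lemma abs_gowersInner_piecewise_le (hη : 0 ≤ η)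
    (hu : gowersInner κ (fun _ x => ν x - 1) ≤ η ^ 2 ^ Fintype.card κ) (T : Finset (κ → Bool)) :
    |gowersInner κ (T.piecewise (fun _ x => ν x - 1) 1)| ≤ η ^ #T := by
  have hprod : ∏ ε, gowersInner κ (fun _ => T.piecewise (fun _ x => ν x - 1) 1 ε) ≤
      ∏ ε, if ε ∈ T then η ^ 2 ^ Fintype.card κ else 1 := by
    refine prod_le_prod (fun _ _ => gowersInner_const_nonneg _) fun ε _ => ?_
    by_cases hε : ε ∈ T
    · simpa [hε] using hu
    · rw [if_neg hε, piecewise_eq_of_notMem _ _ _ hε]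
      exact gowersInner_one.le
  rw [prod_ite_mem, univ_inter, prod_const, ← pow_mul, mul_comm, pow_mul] at hprod
  exact (pow_le_pow_iff_left₀ (abs_nonneg _) (by positivity) (by positivity)).1
    ((abs_gowersInner_pow_le_prod _).trans hprod)

lemma abs_gowersInner_sub_one_le (hη : 0 ≤ η) (hη1 : η ≤ 1)
    (hu : gowersInner κ (fun _ x => ν x - 1) ≤ η ^ 2 ^ Fintype.card κ)
    {G : (κ → Bool) → Z → ℝ} (hG : ∀ τ, G τ = ν ∨ G τ = 1) :
    |gowersInner κ G - 1| ≤ 2 ^ 2 ^ Fintype.card κ * η := by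
  classical
  set S : Finset (κ → Bool) := {τ | G τ = ν}
  have hGS : G = S.piecewise (fun _ => ν) 1 := by
    ext τ : 1
    by_cases hτ : G τ = ν
    · rwa [piecewise_eq_of_mem _ _ _ (by simpa [S] using hτ)]
    · rw [piecewise_eq_of_notMem _ _ _ (by simpa [S] using hτ)]
      exact (hG τ).resolve_left hτ
  rw [hGS, gowersInner_piecewise_eq_sum_powerset, ← add_sum_erase _ _ (empty_mem_powerset S),
    piecewise_empty, gowersInner_one, add_sub_cancel_left]
  calc |∑ T ∈ S.powerset.erase ∅, gowersInner κ (T.piecewise (fun _ x => ν x - 1) 1)|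
      ≤ ∑ T ∈ S.powerset.erase ∅, η := by
        refine (abs_sum_le_sum_abs _ _).trans (sum_le_sum fun T hT => ?_)
        refine (abs_gowersInner_piecewise_le hη hu T).trans ?_
        exact pow_le_of_le_one hη hη1
          (card_ne_zero.2 (nonempty_iff_ne_empty.2 (ne_of_mem_erase hT)))
    _ ≤ 2 ^ 2 ^ Fintype.card κ * η := by
        rw [sum_const, nsmul_eq_mul]
        gcongr
        calc ((#(S.powerset.erase ∅) : ℕ) : ℝ) ≤ #S.powerset := by
              exact_mod_cast card_le_card (erase_subset _ _)
          _ ≤ 2 ^ 2 ^ Fintype.card κ := by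
              rw [card_powerset]
              exact_mod_cast Nat.pow_le_pow_right two_pos (card_le_univ S |>.trans_eq (by simp))

lemma abs_gowersInner_le_of_single (hη : 0 ≤ η)
    (hu : gowersInner κ (fun _ x => ν x - 1) ≤ η ^ 2 ^ Fintype.card κ)
    (hν : gowersInner κ (fun _ => ν) ≤ 2) {F : (κ → Bool) → Z → ℝ} {τ₀ : κ → Bool}
    (hτ₀ : F τ₀ = fun x => ν x - 1)
    (hF : ∀ τ ≠ τ₀, (∀ x, |F τ x| ≤ ν x) ∨ ∀ x, |F τ x| ≤ 1) :
    |gowersInner κ F| ≤ 2 * η := by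
  have hprod : ∏ τ, gowersInner κ (fun _ => F τ) ≤
      ∏ τ, (if τ = τ₀ then η ^ 2 ^ Fintype.card κ else 1) * 2 := by
    refine prod_le_prod (fun _ _ => gowersInner_const_nonneg _) fun τ _ => ?_
    split_ifs with h
    · rw [h, hτ₀]
      linarith [pow_nonneg hη (2 ^ Fintype.card κ)]
    · rw [one_mul]
      rcases hF τ h with hb | hb
      · exact (le_abs_self _).trans ((abs_gowersInner_le fun _ => hb).trans hν)
      · refine (le_abs_self _).trans ((abs_gowersInner_le (G := 1) fun _ => hb).trans ?_)
        rw [gowersInner_one]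
        norm_num
  rw [prod_mul_distrib, Fintype.prod_ite_eq', prod_const, card_univ, Fintype.card_fun,
    Fintype.card_bool, ← mul_pow, mul_comm] at hprod
  exact (pow_le_pow_iff_left₀ (abs_nonneg _) (by positivity) (by positivity)).1
    ((abs_gowersInner_pow_le_prod _).trans hprod)

end Counting

section DualSplitting
variable {α : Type*} [Fintype α] {ν D Db : α → ℝ}

lemma abs_le_two_mul_sq_sub_one {d b : ℝ} (hd : |d| ≤ b) (hb : 2 < b) : |d| ≤ 2 * (b - 1) ^ 2 := by
  nlinarith

lemma sq_le_four_mul_sq_sub_one {d b : ℝ} (hd : |d| ≤ b) (hb : 2 < b) :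
    d ^ 2 ≤ 4 * (b - 1) ^ 2 := by
  nlinarith [sq_abs d, abs_nonneg d]

lemma expect_mul_ite_abs_le (hν : ∀ y, 0 ≤ ν y) (hD : ∀ y, |D y| ≤ Db y) :
    𝔼 y, ν y * (if Db y ≤ 2 then 0 else |D y|) ≤ 2 * 𝔼 y, ν y * (Db y - 1) ^ 2 := by
  rw [mul_expect]
  refine expect_le_expect fun y _ => ?_
  split_ifs with h
  · nlinarith [hν y, sq_nonneg (Db y - 1)]
  · nlinarith [hν y, abs_le_two_mul_sq_sub_one (hD y) (not_le.1 h)]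

lemma abs_expect_sub_one_mul_ite_sq_le (hν : ∀ y, 0 ≤ ν y) (hD : ∀ y, |D y| ≤ Db y) :
    |𝔼 y, (ν y - 1) * (if Db y ≤ 2 then 0 else D y ^ 2)| ≤
      4 * (𝔼 y, (Db y - 1) ^ 2 + 𝔼 y, ν y * (Db y - 1) ^ 2) := by
  rw [← expect_add_distrib, mul_expect]
  refine (abs_expect_le _ _).trans (expect_le_expect fun y _ => ?_)
  have hu : |ν y - 1| ≤ 1 + ν y := by rw [abs_le]; constructor <;> linarith [hν y]
  rw [abs_mul]
  split_ifs with h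
  · rw [abs_zero, mul_zero]
    nlinarith [mul_nonneg (hν y) (sq_nonneg (Db y - 1)), sq_nonneg (Db y - 1)]
  · rw [abs_of_nonneg (sq_nonneg (D y))]
    nlinarith [mul_le_mul hu (sq_le_four_mul_sq_sub_one (hD y) (not_le.1 h)) (sq_nonneg _)
      (by linarith [hν y] : (0 : ℝ) ≤ 1 + ν y)]

lemma sq_expect_mul_ite_abs_le (hν : ∀ y, 0 ≤ ν y) :
    (𝔼 y, ν y * (if Db y ≤ 2 then |D y| else 0)) ^ 2 ≤
      (𝔼 y, ν y) * ((𝔼 y, if Db y ≤ 2 then D y ^ 2 else 0) + 𝔼 y, (ν y - 1) * D y ^ 2 -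
        𝔼 y, (ν y - 1) * (if Db y ≤ 2 then 0 else D y ^ 2)) := by
  refine (sq_expect_mul_le _ _ hν).trans_eq ?_
  congr 1
  rw [← expect_add_distrib, ← expect_sub_distrib]
  refine expect_congr rfl fun y _ => ?_
  split_ifs
  · rw [sq_abs]; ring
  · ring

lemma abs_expect_mul_le_of_moments {f : α → ℝ} {β : ℝ} (hν : ∀ y, 0 ≤ ν y)
    (hf : ∀ y, |f y| ≤ ν y) (hD : ∀ y, |D y| ≤ Db y) (hEν : 𝔼 y, ν y ≤ 2)
    (hmom₁ : 𝔼 y, (Db y - 1) ^ 2 ≤ 4 * β) (hmomν : 𝔼 y, ν y * (Db y - 1) ^ 2 ≤ 4 * β)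
    (hcross : |𝔼 y, (ν y - 1) * D y ^ 2| ≤ 2 * β) :
    |𝔼 y, f y * D y| ≤ 8 * β + √(2 * |𝔼 y, if Db y ≤ 2 then D y ^ 2 else 0| + 68 * β) := by
  have hsplit : |𝔼 y, f y * D y| ≤ 𝔼 y, ν y * (if Db y ≤ 2 then 0 else |D y|) +
      𝔼 y, ν y * (if Db y ≤ 2 then |D y| else 0) := by
    rw [← expect_add_distrib]
    refine (abs_expect_le _ _).trans (expect_le_expect fun y _ => ?_)
    rw [abs_mul]
    split_ifs <;> nlinarith [hf y, abs_nonneg (D y), abs_nonneg (f y)]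
  have hsmall : (𝔼 y, ν y * (if Db y ≤ 2 then |D y| else 0)) ^ 2 ≤
      2 * |𝔼 y, if Db y ≤ 2 then D y ^ 2 else 0| + 68 * β := by
    have hrest := abs_expect_sub_one_mul_ite_sq_le hν hD
    have hX : ((𝔼 y, if Db y ≤ 2 then D y ^ 2 else 0) + 𝔼 y, (ν y - 1) * D y ^ 2 -
        𝔼 y, (ν y - 1) * (if Db y ≤ 2 then 0 else D y ^ 2)) ≤
        |𝔼 y, if Db y ≤ 2 then D y ^ 2 else 0| + 34 * β := by
      linarith [le_abs_self (𝔼 y, if Db y ≤ 2 then D y ^ 2 else 0), (abs_le.1 hcross).2,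
        (abs_le.1 hrest).1]
    have hEν₀ : 0 ≤ 𝔼 y, ν y := expect_nonneg fun y _ => hν y
    have hβ : 0 ≤ β := by linarith [abs_nonneg (𝔼 y, (ν y - 1) * D y ^ 2)]
    calc _ ≤ 2 * (|𝔼 y, if Db y ≤ 2 then D y ^ 2 else 0| + 34 * β) :=
          (sq_expect_mul_ite_abs_le hν).trans ((mul_le_mul_of_nonneg_left hX hEν₀).trans
            (mul_le_mul_of_nonneg_right hEν (by positivity)))
      _ = _ := by ring
  linarith [expect_mul_ite_abs_le hν hD, Real.abs_le_sqrt hsmall,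
    le_abs_self (𝔼 y, ν y * (if Db y ≤ 2 then |D y| else 0))]

end DualSplitting

section ReplacementStep
variable {ι Z : Type*} [Fintype ι] [DecidableEq ι] [Nonempty ι] [AddCommGroup Z] [Fintype Z]
  [Nonempty Z] {ν : Z → ℝ} {η : ℝ}

lemma abs_expect_mul_dualFun_mul_dualFun_sub_one_le (hη : 0 ≤ η) (hη1 : η ≤ 1)
    (hu : gowersInner (ι ⊕ ι) (fun _ x => ν x - 1) ≤ η ^ 2 ^ Fintype.card (ι ⊕ ι))
    {ω₀ : ι → Bool} {c : Z → ℝ} {A B : (ι → Bool) → Z → ℝ} (hc : c = ν ∨ c = 1)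
    (hA : ∀ ω, A ω = ν ∨ A ω = 1) (hB : ∀ ω, B ω = ν ∨ B ω = 1) :
    |𝔼 y, c y * (dualFun A ω₀ y * dualFun B ω₀ y) - 1| ≤ 2 ^ 2 ^ Fintype.card (ι ⊕ ι) * η := by
  rw [← gowersInner_pairFamily]
  refine abs_gowersInner_sub_one_le hη hη1 hu fun τ => ?_
  rcases eq_or_ne τ (Sum.elim ω₀ ω₀) with rfl | hτ
  · rwa [pairFamily_sumElim_self]
  · exact pairFamily_mem_of_ne (P := fun φ => φ = ν ∨ φ = 1) hA hB (Or.inr rfl) hτ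

lemma expect_mul_sq_dualFun_sub_one_le (hη : 0 ≤ η) (hη1 : η ≤ 1)
    (hu : gowersInner (ι ⊕ ι) (fun _ x => ν x - 1) ≤ η ^ 2 ^ Fintype.card (ι ⊕ ι))
    {ω₀ : ι → Bool} {c : Z → ℝ} {M : (ι → Bool) → Z → ℝ} (hc : c = ν ∨ c = 1)
    (hM : ∀ ω, M ω = ν ∨ M ω = 1) :
    𝔼 y, c y * (dualFun M ω₀ y - 1) ^ 2 ≤ 4 * (2 ^ 2 ^ Fintype.card (ι ⊕ ι) * η) := by
  have hone : ∀ ω, (1 : (ι → Bool) → Z → ℝ) ω = ν ∨ (1 : (ι → Bool) → Z → ℝ) ω = 1 :=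
    fun _ => Or.inr rfl
  have h2 := abs_expect_mul_dualFun_mul_dualFun_sub_one_le hη hη1 hu (ω₀ := ω₀) hc hM hM
  have h1 := abs_expect_mul_dualFun_mul_dualFun_sub_one_le hη hη1 hu (ω₀ := ω₀) hc hM hone
  have h0 := abs_expect_mul_dualFun_mul_dualFun_sub_one_le hη hη1 hu (ω₀ := ω₀) hc hone hone
  simp only [dualFun_one, Pi.one_apply, mul_one] at h1 h0
  have hexp : 𝔼 y, c y * (dualFun M ω₀ y - 1) ^ 2 = 𝔼 y, c y * (dualFun M ω₀ y * dualFun M ω₀ y)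
      - 2 * 𝔼 y, c y * dualFun M ω₀ y + 𝔼 y, c y := by
    rw [mul_expect, ← expect_sub_distrib, ← expect_add_distrib]
    exact expect_congr rfl fun y _ => by ring
  rw [hexp]
  linarith [(abs_le.1 h2).2, (abs_le.1 h1).1, (abs_le.1 h0).2]

lemma abs_expect_sub_one_mul_sq_dualFun_le (hη : 0 ≤ η)
    (hu : gowersInner (ι ⊕ ι) (fun _ x => ν x - 1) ≤ η ^ 2 ^ Fintype.card (ι ⊕ ι))
    (hν : gowersInner (ι ⊕ ι) (fun _ => ν) ≤ 2) {g : (ι → Bool) → Z → ℝ}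
    (hg : ∀ ω, (∀ x, |g ω x| ≤ ν x) ∨ ∀ x, |g ω x| ≤ 1) (ω₀ : ι → Bool) :
    |𝔼 y, (ν y - 1) * dualFun g ω₀ y ^ 2| ≤ 2 * η := by
  simp only [sq]
  rw [← gowersInner_pairFamily]
  exact abs_gowersInner_le_of_single hη hu hν pairFamily_sumElim_self
    fun τ hτ => pairFamily_mem_of_ne (P := fun φ => (∀ x, |φ x| ≤ ν x) ∨ ∀ x, |φ x| ≤ 1) hg hg
      (Or.inr fun x => by simp) hτ

lemma exists_abs_gowersInner_le_sqrt_update (hν : ∀ x, 0 ≤ ν x) (hη : 0 ≤ η)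
    (hu : gowersInner (ι ⊕ ι) (fun _ x => ν x - 1) ≤ η ^ 2 ^ Fintype.card (ι ⊕ ι))
    (hβ : 2 ^ 2 ^ Fintype.card (ι ⊕ ι) * η ≤ 1) {g : (ι → Bool) → Z → ℝ} {ω₀ : ι → Bool}
    (hg₀ : ∀ x, |g ω₀ x| ≤ ν x) (hg : ∀ ω, (∀ x, |g ω x| ≤ ν x) ∨ ∀ x, |g ω x| ≤ 1) :
    ∃ φ : Z → ℝ, (∀ x, |φ x| ≤ 1) ∧ |gowersInner ι g| ≤
      8 * (2 ^ 2 ^ Fintype.card (ι ⊕ ι) * η) + √(4 * |gowersInner ι (update g ω₀ φ)| +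
        68 * (2 ^ 2 ^ Fintype.card (ι ⊕ ι) * η)) := by
  set β := 2 ^ 2 ^ Fintype.card (ι ⊕ ι) * η
  have hηβ : η ≤ β := le_mul_of_one_le_left hη (one_le_pow₀ one_le_two)
  have hη1 : η ≤ 1 := hηβ.trans hβ
  obtain ⟨M, hM, hgM⟩ := exists_majorant g hg
  set D := dualFun g ω₀
  set Db := dualFun M ω₀
  have hD : ∀ y, |D y| ≤ Db y := abs_dualFun_le fun ω _ x => hgM ω x
  have hmom₁ : 𝔼 y, (Db y - 1) ^ 2 ≤ 4 * β := by
    simpa only [Pi.one_apply, one_mul] using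
      expect_mul_sq_dualFun_sub_one_le hη hη1 hu (ω₀ := ω₀) (Or.inr rfl) hM
  have hmomν : 𝔼 y, ν y * (Db y - 1) ^ 2 ≤ 4 * β :=
    expect_mul_sq_dualFun_sub_one_le hη hη1 hu (Or.inl rfl) hM
  have hEν : 𝔼 y, ν y ≤ 2 := by
    have h := abs_expect_mul_dualFun_mul_dualFun_sub_one_le hη hη1 hu (ω₀ := ω₀) (A := 1)
      (B := 1) (Or.inl rfl) (fun _ => Or.inr rfl) (fun _ => Or.inr rfl)
    simp only [dualFun_one, Pi.one_apply, mul_one] at h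
    linarith [(abs_le.1 h).2]
  have hν₂ : gowersInner (ι ⊕ ι) (fun _ => ν) ≤ 2 := by
    linarith [(abs_le.1 (abs_gowersInner_sub_one_le hη hη1 hu fun _ => Or.inl rfl)).2]
  have hcross : |𝔼 y, (ν y - 1) * D y ^ 2| ≤ 2 * β :=
    (abs_expect_sub_one_mul_sq_dualFun_le hη hu hν₂ hg ω₀).trans (by linarith)
  refine ⟨fun y => if Db y ≤ 2 then D y / 2 else 0, fun y => ?_, ?_⟩
  · dsimp only
    split_ifs with h
    · rw [abs_div, abs_two]; linarith [hD y]
    · simp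
  have hupd : gowersInner ι (update g ω₀ fun y => if Db y ≤ 2 then D y / 2 else 0) =
      (𝔼 y, if Db y ≤ 2 then D y ^ 2 else 0) / 2 := by
    rw [gowersInner_eq_expect_mul_dualFun _ ω₀, update_self, dualFun_update_self, expect_div]
    exact expect_congr rfl fun y _ => by split_ifs <;> ring
  rw [hupd, abs_div, abs_two, gowersInner_eq_expect_mul_dualFun _ ω₀]
  convert abs_expect_mul_le_of_moments hν hg₀ hD hEν hmom₁ hmomν hcross using 4
  ring

end ReplacementStep

lemma gowersInner_const_congr {ι κ Z : Type*} [Fintype ι] [DecidableEq ι] [Fintype κ]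
    [DecidableEq κ] [AddCommGroup Z] [Fintype Z] (e : ι ≃ κ) (f : Z → ℝ) :
    gowersInner κ (fun _ => f) = gowersInner ι (fun _ => f) := by
  unfold gowersInner
  congr 1
  ext x
  refine Fintype.expect_equiv (e.arrowCongr (Equiv.refl Z)).symm _ _ fun h => ?_
  refine Fintype.prod_equiv (e.arrowCongr (Equiv.refl Bool)).symm _ _ fun ω => ?_
  rw [← cubeDot_comp_equiv e]
  rfl

section GowersNormConversion
variable {Z : Type*} [AddCommGroup Z] [Fintype Z] {s : ℕ} {f : Z → ℝ}

lemma gowersNorm_of_isEmpty [IsEmpty Z] : gowersNorm Z s f = 0 := by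
  rw [gowersNorm_eq_gowersInner_rpow, gowersInner, univ_eq_empty, expect_empty]
  exact Real.zero_rpow (by positivity)

lemma gowersInner_le_pow_of_gowersNorm_le {η : ℝ} (hη : 0 ≤ η) (h : gowersNorm Z s f ≤ η) :
    gowersInner (Fin s) (fun _ => f) ≤ η ^ 2 ^ s := by
  rcases lt_or_ge (gowersInner (Fin s) (fun _ => f)) 0 with hneg | hnonneg
  · exact hneg.le.trans (by positivity)
  rw [gowersNorm_eq_gowersInner_rpow, Real.rpow_inv_le_iff_of_pos hnonneg hη (by positivity)] at h
  exact_mod_cast h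

lemma gowersNorm_le_of_gowersInner_le [Nonempty Z] (hs : 0 < s) {ε : ℝ} (hε : 0 ≤ ε)
    (h : gowersInner (Fin s) (fun _ => f) ≤ ε ^ 2 ^ s) : gowersNorm Z s f ≤ ε := by
  have : Nonempty (Fin s) := ⟨⟨0, hs⟩⟩
  rw [gowersNorm_eq_gowersInner_rpow,
    Real.rpow_inv_le_iff_of_pos (gowersInner_const_nonneg f) hε (by positivity)]
  exact_mod_cast h

end GowersNormConversion

section WeakNorm
variable {ι Z : Type*} [Fintype ι] [DecidableEq ι] [AddCommGroup Z] [Fintype Z]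

lemma gowersInner_update_neg (g : (ι → Bool) → Z → ℝ) (ω : ι → Bool) :
    gowersInner ι (update g ω (-g ω)) = -gowersInner ι g := by
  simp only [gowersInner_eq_expect_mul_dualFun _ ω, update_self, dualFun_update_self, Pi.neg_apply,
    neg_mul, expect_neg_distrib]

variable {s : ℕ}

lemma weakNorm_avg_eq_gowersInner (f : Z → ℝ) (k : (Fin s → Bool) → Z → ℝ) :
    avg (Z × (Fin s → Z)) (fun xh =>
      f xh.1 * ∏ ω ∈ univ.filter (fun ω : Fin s → Bool => ω ≠ fun _ => false),
        k ω (xh.1 + ∑ i, if ω i then xh.2 i else 0)) =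
      gowersInner (Fin s) (update k (fun _ => false) f) := by
  rw [avg_eq_expect, ← univ_product_univ, expect_product, gowersInner]
  refine expect_congr rfl fun x _ => expect_congr rfl fun h _ => ?_
  rw [← mul_prod_erase univ _ (mem_univ fun _ => false), update_self, cubeDot_false, add_zero,
    filter_ne']
  exact congrArg _ (prod_congr rfl fun ω hω => by rw [update_of_ne (ne_of_mem_erase hω)]; rfl)

lemma gowersInner_update_le_weakNorm (f : Z → ℝ) {k : (Fin s → Bool) → Z → ℝ}
    (hk : ∀ ω x, |k ω x| ≤ 1) :
    gowersInner (Fin s) (update k (fun _ => false) f) ≤ weakNorm Z s f := by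
  refine le_csSup ⟨gowersInner (Fin s) (update 1 (fun _ => false) fun x => |f x|), ?_⟩
    ⟨k, fun ω x => abs_le.1 (hk ω x), (weakNorm_avg_eq_gowersInner f k).symm⟩
  rintro r ⟨k', hk', rfl⟩
  rw [weakNorm_avg_eq_gowersInner]
  refine (le_abs_self _).trans (abs_gowersInner_le fun ω x => ?_)
  rcases eq_or_ne ω (fun _ => false) with rfl | hω
  · simp
  · simpa [update_of_ne hω, abs_le] using hk' ω x

lemma abs_gowersInner_le_weakNorm (hs : 0 < s) {f : Z → ℝ} {g : (Fin s → Bool) → Z → ℝ}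
    (hg₀ : g (fun _ => false) = f) (hg : ∀ ω ≠ (fun _ => false), ∀ x, |g ω x| ≤ 1) :
    |gowersInner (Fin s) g| ≤ weakNorm Z s f := by
  set k := update g (fun _ => false) 0
  have hk : ∀ ω x, |k ω x| ≤ 1 := fun ω x => by
    rcases eq_or_ne ω (fun _ => false) with rfl | hω
    · simp [k]
    · simpa [k, update_of_ne hω] using hg ω hω x
  have hkf : update k (fun _ => false) f = g := by simp [k, ← hg₀]
  -- flipping the sign of the vertex `ω₁ ≠ 0` flips the sign of the Gowers inner product
  set ω₁ : Fin s → Bool := fun _ => true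
  have hω₁ : ω₁ ≠ fun _ => false := fun h => by simpa [ω₁] using congrFun h ⟨0, hs⟩
  have hk' : ∀ ω x, |update k ω₁ (-k ω₁) ω x| ≤ 1 := fun ω x => by
    rcases eq_or_ne ω ω₁ with rfl | hω
    · simpa using hk _ x
    · simpa [update_of_ne hω] using hk ω x
  have hkf' : update (update k ω₁ (-k ω₁)) (fun _ => false) f = update g ω₁ (-g ω₁) := by
    rw [update_comm hω₁, hkf]
    simp [k, update_of_ne hω₁]
  rw [abs_le']
  constructor
  · simpa [hkf] using gowersInner_update_le_weakNorm f hk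
  · simpa [hkf', gowersInner_update_neg] using gowersInner_update_le_weakNorm f hk'

lemma abs_gowersInner_le_weakNorm_of_card_le_one (hs : 0 < s) {f : Z → ℝ}
    {S : Finset (Fin s → Bool)} {g : (Fin s → Bool) → Z → ℝ} (hS : #S ≤ 1)
    (h0 : (fun _ => false) ∈ S) (hgS : ∀ ω ∈ S, g ω = f) (hg : ∀ ω ∉ S, ∀ x, |g ω x| ≤ 1) :
    |gowersInner (Fin s) g| ≤ weakNorm Z s f :=
  abs_gowersInner_le_weakNorm hs (hgS _ h0) fun ω hω =>
    hg ω fun hωS => hω (card_le_one.1 hS _ hωS _ h0)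

end WeakNorm

lemma add_sqrt_le_of_le {β a θ : ℝ} (hθ : 0 < θ) (hβθ : β ≤ θ / 16)
    (hβθ' : β ≤ θ ^ 2 / 544) (ha : a ≤ θ ^ 2 / 32) : 8 * β + √(4 * a + 68 * β) ≤ θ := by
  have : √(4 * a + 68 * β) ≤ θ / 2 :=
    Real.sqrt_le_iff.2 ⟨by positivity, by linarith⟩
  linarith

/-- The statement proved by induction on the number `n + 1` of copies of `f` in the family. -/
def GowersInnerControl (s n : ℕ) (η θ : ℝ) : Prop :=
  ∀ (Z : Type) [AddCommGroup Z] [Fintype Z] [Nonempty Z] (ν f : Z → ℝ), (∀ x, 0 ≤ ν x) →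
    (∀ x, |f x| ≤ ν x) →
    gowersInner (Fin s ⊕ Fin s) (fun _ x => ν x - 1) ≤ η ^ 2 ^ Fintype.card (Fin s ⊕ Fin s) →
    weakNorm Z s f ≤ η → ∀ (S : Finset (Fin s → Bool)) (g : (Fin s → Bool) → Z → ℝ),
    (fun _ => false) ∈ S → #S ≤ n + 1 → (∀ ω ∈ S, g ω = f) → (∀ ω ∉ S, ∀ x, |g ω x| ≤ 1) →
    |gowersInner (Fin s) g| ≤ θ

lemma gowersInnerControl_zero {s : ℕ} (hs : 0 < s) (θ : ℝ) :
    GowersInnerControl s 0 (min 1 θ) θ := fun _ _ _ _ _ _ _ _ _ hw _ _ h0 hS hgS hg =>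
  (abs_gowersInner_le_weakNorm_of_card_le_one hs hS h0 hgS hg).trans (hw.trans (min_le_right _ _))

lemma gowersInnerControl_succ {s n : ℕ} (hs : 0 < s) {θ η : ℝ} (hθ : 0 < θ) (hη : 0 ≤ η)
    (h : GowersInnerControl s n η (θ ^ 2 / 32)) :
    GowersInnerControl s (n + 1) (min η (min (min (θ / 16) (θ ^ 2 / 544)) 1 /
      2 ^ 2 ^ Fintype.card (Fin s ⊕ Fin s))) θ := by
  have : Nonempty (Fin s) := ⟨⟨0, hs⟩⟩
  intro Z _ _ _ ν f hν hf hu hw S g h0 hS hgS hg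
  set C : ℝ := 2 ^ 2 ^ Fintype.card (Fin s ⊕ Fin s)
  set η' := min η (min (min (θ / 16) (θ ^ 2 / 544)) 1 / C)
  have hη' : 0 ≤ η' := by positivity
  have hCη' : C * η' ≤ min (min (θ / 16) (θ ^ 2 / 544)) 1 :=
    (mul_le_mul_of_nonneg_left (min_le_right _ _) (by positivity)).trans_eq
      (mul_div_cancel₀ _ (by positivity))
  have hβ₁ : C * η' ≤ θ / 16 := hCη'.trans ((min_le_left _ _).trans (min_le_left _ _))
  have hβ₂ : C * η' ≤ θ ^ 2 / 544 := hCη'.trans ((min_le_left _ _).trans (min_le_right _ _))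
  by_cases hS1 : #S ≤ 1
  · refine (abs_gowersInner_le_weakNorm_of_card_le_one hs hS1 h0 hgS hg).trans (hw.trans ?_)
    nlinarith [le_mul_of_one_le_left hη' (one_le_pow₀ one_le_two : (1 : ℝ) ≤ C)]
  obtain ⟨ω₀, hω₀S, hω₀⟩ := exists_mem_ne (by omega : 1 < #S) (fun _ => false)
  obtain ⟨φ, hφ, hstep⟩ := exists_abs_gowersInner_le_sqrt_update hν hη' hu
    (hCη'.trans (min_le_right _ _)) (g := g) (ω₀ := ω₀) (by rw [hgS ω₀ hω₀S]; exact hf)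
    fun ω => if h : ω ∈ S then .inl (by rw [hgS ω h]; exact hf) else .inr (hg ω h)
  have hrec := h Z ν f hν hf (hu.trans (pow_le_pow_left₀ hη' (min_le_left _ _) _))
    (hw.trans (min_le_left _ _)) (S.erase ω₀) (update g ω₀ φ) (mem_erase.2 ⟨Ne.symm hω₀, h0⟩)
    (by rw [card_erase_of_mem hω₀S]; omega)
    (fun ω hω => by rw [update_of_ne (ne_of_mem_erase hω)]; exact hgS ω (mem_of_mem_erase hω))
    fun ω hω x => by
      rcases eq_or_ne ω ω₀ with rfl | hne
      · simpa using hφ x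
      · rw [update_of_ne hne]
        exact hg ω (fun h => hω (mem_erase.2 ⟨hne, h⟩)) x
  exact hstep.trans (add_sqrt_le_of_le hθ hβ₁ hβ₂ hrec)

lemma exists_gowersInnerControl {s : ℕ} (hs : 0 < s) (n : ℕ) {θ : ℝ} (hθ : 0 < θ) :
    ∃ η, 0 < η ∧ η ≤ 1 ∧ GowersInnerControl s n η θ := by
  induction n generalizing θ with
  | zero => exact ⟨min 1 θ, by positivity, min_le_left _ _, gowersInnerControl_zero hs θ⟩
  | succ n ih =>
    obtain ⟨η, hη0, hη1, h⟩ := ih (θ := θ ^ 2 / 32) (by positivity)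
    exact ⟨_, by positivity, (min_le_left _ _).trans hη1,
      gowersInnerControl_succ hs hθ hη0.le h⟩

theorem stmt0 (s : ℕ) (hs : 2 ≤ s) (ε : ℝ) (hε : 0 < ε) :
    ∃ η : ℝ, 0 < η ∧ η ≤ 1 ∧
      ∀ (Z : Type) [AddCommGroup Z] [Fintype Z] (ν f : Z → ℝ),
        (∀ x, 0 ≤ ν x) →
        gowersNorm Z (2 * s) (fun x => ν x - 1) ≤ η →
        (∀ x, |f x| ≤ ν x) →
        weakNorm Z s f ≤ η →
        gowersNorm Z s f ≤ ε := by
  obtain ⟨η, hη0, hη1, H⟩ :=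
    exists_gowersInnerControl (s := s) (by omega) (2 ^ s - 1) (θ := ε ^ 2 ^ s) (by positivity)
  refine ⟨η, hη0, hη1, fun Z _ _ ν f hν hu hf hw => ?_⟩
  rcases isEmpty_or_nonempty Z with hZ | hZ
  · rw [gowersNorm_of_isEmpty]
    exact hε.le
  have hu' : gowersInner (Fin s ⊕ Fin s) (fun _ x => ν x - 1) ≤
      η ^ 2 ^ Fintype.card (Fin s ⊕ Fin s) := by
    rw [gowersInner_const_congr (finSumFinEquiv.trans (finCongr (two_mul s).symm)).symm,
      Fintype.card_sum, Fintype.card_fin, ← two_mul]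
    exact gowersInner_le_pow_of_gowersNorm_le hη0.le hu
  refine gowersNorm_le_of_gowersInner_le (by omega) hε.le ((le_abs_self _).trans ?_)
  refine H Z ν f hν hf hu' hw univ (fun _ => f) (mem_univ _) ?_ (fun _ _ => rfl) (by simp)
  rw [card_univ, Fintype.card_fun, Fintype.card_bool, Fintype.card_fin]
  exact (Nat.sub_add_cancel Nat.one_le_two_pow).ge
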